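/- Let p ∈ [0,1]^n, ŷ ∈ {0,1}^n with s = Σᵢ pᵢŷᵢ > 0. Set k = Σᵢ ŷᵢ, μ = s/k, λ = Σᵢ pᵢ(1−ŷᵢ). Then b_L(k,μ,λ) ≤ IDC(p,ŷ)/SDC(p,ŷ) ≤ b_U(k,μ,λ), where b_L(k,μ,λ) = (k + kμ + λ)/(k + 1 + (k−1)μ + λ) and b_U(k,μ,λ) = Σ_{i=0}^{∞} (λⁱe^{−λ}/i!)·(k + kμ + λ)/(k + kμ + i). -/

import Mathlib

open Finset

/-! ### Auxiliary algebraic (tangent-line) inequalities -/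

private lemma tan_conv {C x m : ℝ} (hx : 0 < C + x) (hm : 0 < C + m) :
    1/(C+m) - (x-m)/(C+m)^2 ≤ 1/(C+x) := by
  have h : 1/(C+x) - (1/(C+m) - (x-m)/(C+m)^2) = (x-m)^2/((C+m)^2*(C+x)) := by
    field_simp; ring
  have h2 : 0 ≤ (x-m)^2/((C+m)^2*(C+x)) := by positivity
  linarith

private lemma tan_conc {C t s : ℝ} (hC : 0 < C) (ht : 0 < C + t) (hs : 0 < C + s) :
    t/(C+t) ≤ s/(C+s) + C*(t-s)/(C+s)^2 := by
  have h : s/(C+s) + C*(t-s)/(C+s)^2 - t/(C+t) = C*(t-s)^2/((C+s)^2*(C+t)) := by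
    field_simp; ring
  have h2 : 0 ≤ C*(t-s)^2/((C+s)^2*(C+t)) := by positivity
  linarith

private lemma tan3 {c x μ : ℝ} (hc : 0 < c) (hx : 0 < c - x) (hμ : 0 < c - μ) :
    μ/(c-μ) + c*(x-μ)/(c-μ)^2 ≤ x/(c-x) := by
  have h : x/(c-x) - (μ/(c-μ) + c*(x-μ)/(c-μ)^2) = c*(x-μ)^2/((c-μ)^2*(c-x)) := by
    field_simp; ring
  have h2 : 0 ≤ c*(x-μ)^2/((c-μ)^2*(c-x)) := by positivity
  linarith

private lemma conv_nat {b : ℝ} (hb : 0 < b) (l : ℕ) :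
    1/(b+1) + (1 - (l:ℝ))*(1/b - 1/(b+1)) ≤ 1/(b + (l:ℝ)) := by
  have hl : (0:ℝ) ≤ (l:ℝ) * ((l:ℝ) - 1) := by
    rcases Nat.eq_zero_or_pos l with h|h
    · simp [h]
    · have h1 : (1:ℝ) ≤ (l:ℝ) := by exact_mod_cast h
      nlinarith
  have hbl : (0:ℝ) < b + (l:ℝ) := by positivity
  have key : 1/(b+(l:ℝ)) - (1/(b+1) + (1 - (l:ℝ))*(1/b - 1/(b+1)))
      = ((l:ℝ)*((l:ℝ)-1))/(b*(b+1)*(b+(l:ℝ))) := by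
    field_simp; ring
  have h2 : 0 ≤ ((l:ℝ)*((l:ℝ)-1))/(b*(b+1)*(b+(l:ℝ))) :=
    div_nonneg hl (by positivity)
  linarith

/-! ### Bernoulli product weights -/

section BW

variable {ι : Type*} [Fintype ι] [DecidableEq ι]

/-- Product Bernoulli weight. -/
noncomputable def bw (q : ι → ℝ) (v : ι → Bool) : ℝ :=
  ∏ i, (if v i then q i else 1 - q i)

/-- Number of `true` coordinates within `A`. -/
noncomputable def cntF (A : Finset ι) (v : ι → Bool) : ℝ :=
  ∑ i ∈ A, (if v i then (1:ℝ) else 0)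

lemma cntF_nonneg (A : Finset ι) (v : ι → Bool) : 0 ≤ cntF A v := by
  refine Finset.sum_nonneg fun i _ => ?_
  by_cases h : v i <;> simp [h]

lemma cntF_update {A : Finset ι} {i : ι} (hi : i ∉ A) (v : ι → Bool) (b : Bool) :
    cntF A (Function.update v i b) = cntF A v := by
  refine Finset.sum_congr rfl fun j hj => ?_
  have hji : j ≠ i := by rintro rfl; exact hi hj
  rw [Function.update_of_ne hji]

lemma bw_nonneg {q : ι → ℝ} (hq : ∀ i, q i ∈ Set.Icc (0:ℝ) 1) (v : ι → Bool) :
    0 ≤ bw q v := by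
  refine Finset.prod_nonneg fun i _ => ?_
  by_cases h : v i
  · simpa [h] using (hq i).1
  · simp only [h]
    have := (hq i).2
    simp only [Bool.false_eq_true, if_false]
    linarith

lemma bw_sum (q : ι → ℝ) : ∑ v : ι → Bool, bw q v = 1 := by
  unfold bw
  rw [← Fintype.prod_sum (fun (i : ι) (b : Bool) => if b = true then q i else 1 - q i)]
  simp

lemma sum_pair (j : ι) (F : (ι → Bool) → ℝ) :
    ∑ v : ι → Bool, F v
      = ∑ v : ι → Bool, (if v j then F v + F (Function.update v j false) else 0) := by
  rw [← Finset.sum_filter_add_sum_filter_not Finset.univ (fun v => v j = true) F,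
    ← Finset.sum_filter]
  rw [Finset.sum_add_distrib]
  congr 1
  refine Finset.sum_nbij' (fun v => Function.update v j true)
    (fun v => Function.update v j false) ?_ ?_ ?_ ?_ ?_
  · intro v _
    simp
  · intro v _
    simp
  · intro v hv
    simp only [Finset.mem_filter, Finset.mem_univ, true_and] at hv
    have hv' : v j = false := by simpa using hv
    show Function.update (Function.update v j true) j false = v
    rw [Function.update_idem, ← hv', Function.update_eq_self]
  · intro v hv
    simp only [Finset.mem_filter, Finset.mem_univ, true_and] at hv
    show Function.update (Function.update v j false) j true = v
    rw [Function.update_idem, ← hv, Function.update_eq_self]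
  · intro v hv
    simp only [Finset.mem_filter, Finset.mem_univ, true_and] at hv
    have hv' : v j = false := by simpa using hv
    show F v = F (Function.update (Function.update v j true) j false)
    rw [Function.update_idem, ← hv', Function.update_eq_self]

lemma bw_prod_split (q : ι → ℝ) (v : ι → Bool) (j : ι) :
    bw q v = (if v j then q j else 1 - q j)
      * ∏ i ∈ Finset.univ.erase j, (if v i then q i else 1 - q i) :=
  (Finset.mul_prod_erase Finset.univ _ (Finset.mem_univ j)).symm

lemma bw_update (q : ι → ℝ) (v : ι → Bool) (j : ι) (b : Bool) :
    bw q (Function.update v j b) = (if b then q j else 1 - q j)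
      * ∏ i ∈ Finset.univ.erase j, (if v i then q i else 1 - q i) := by
  rw [bw_prod_split q _ j, Function.update_self]
  congr 1
  refine Finset.prod_congr rfl fun i hi => ?_
  rw [Function.update_of_ne (Finset.ne_of_mem_erase hi)]

lemma bw_split (q : ι → ℝ) (j : ι) (F : Bool → (ι → Bool) → ℝ)
    (hF : ∀ v b b', F b (Function.update v j b') = F b v) :
    ∑ v : ι → Bool, bw q v * F (v j) v
      = ∑ v : ι → Bool, bw q v * (q j * F true v + (1 - q j) * F false v) := by
  rw [sum_pair j (fun v => bw q v * F (v j) v),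
      sum_pair j (fun v => bw q v * (q j * F true v + (1 - q j) * F false v))]
  refine Finset.sum_congr rfl fun v _ => ?_
  by_cases h : v j
  · have e1 : bw q v = q j
        * ∏ i ∈ Finset.univ.erase j, (if v i then q i else 1 - q i) := by
      rw [bw_prod_split q v j, if_pos h]
    have e2 : bw q (Function.update v j false) = (1 - q j)
        * ∏ i ∈ Finset.univ.erase j, (if v i then q i else 1 - q i) := by
      rw [bw_update]; norm_num
    simp only [h, if_true, Function.update_self, hF]
    rw [e1, e2]
    ring
  · simp [h]

lemma bw_extract_fun (q : ι → ℝ) (i : ι) (g : (ι → Bool) → ℝ)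
    (hg : ∀ v b, g (Function.update v i b) = g v) :
    ∑ v : ι → Bool, bw q v * ((if v i then (1:ℝ) else 0) * g v)
      = q i * ∑ v : ι → Bool, bw q v * g v := by
  have h := bw_split q i (fun b v => (if b then (1:ℝ) else 0) * g v)
    (fun v b b' => by simp [hg])
  norm_num at h
  calc ∑ v : ι → Bool, bw q v * ((if v i then (1:ℝ) else 0) * g v)
      = ∑ v : ι → Bool, (if v i then bw q v * g v else 0) := by
        refine Finset.sum_congr rfl fun v _ => by by_cases h' : v i <;> simp [h']
    _ = ∑ v : ι → Bool, bw q v * (q i * g v) := h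
    _ = q i * ∑ v : ι → Bool, bw q v * g v := by
        rw [Finset.mul_sum]
        exact Finset.sum_congr rfl fun v _ => by ring

lemma bw_extract (q : ι → ℝ) (i : ι) :
    ∑ v : ι → Bool, bw q v * (if v i then (1:ℝ) else 0) = q i := by
  have h := bw_extract_fun q i (fun _ => (1:ℝ)) (fun _ _ => rfl)
  simp only [mul_one] at h
  rw [h, bw_sum, mul_one]

lemma bw_mul_cnt (q : ι → ℝ) (A : Finset ι) :
    ∑ v : ι → Bool, bw q v * cntF A v = ∑ i ∈ A, q i := by
  unfold cntF
  simp_rw [Finset.mul_sum]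
  rw [Finset.sum_comm]
  exact Finset.sum_congr rfl fun i _ => bw_extract q i

lemma bw_extract_cnt (q : ι → ℝ) {i : ι} {A : Finset ι} (hi : i ∉ A) :
    ∑ v : ι → Bool, bw q v * ((if v i then (1:ℝ) else 0) * cntF A v)
      = q i * ∑ j ∈ A, q j := by
  rw [bw_extract_fun q i _ (fun v b => cntF_update hi v b), bw_mul_cnt]

end BW

/-! ### Poisson weights -/

noncomputable def pois (ν : ℝ) (i : ℕ) : ℝ := ν ^ i * Real.exp (-ν) / (Nat.factorial i)

noncomputable def psi (ν b : ℝ) : ℝ := ∑' i : ℕ, pois ν i * (1 / (b + (i:ℝ)))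

lemma pois_nonneg {ν : ℝ} (hν : 0 ≤ ν) (i : ℕ) : 0 ≤ pois ν i := by
  unfold pois; positivity

lemma summable_pois (ν : ℝ) : Summable (pois ν) := by
  have h : pois ν = fun i => (ν ^ i / (Nat.factorial i)) * Real.exp (-ν) := by
    funext i; unfold pois; ring
  rw [h]
  exact (Real.summable_pow_div_factorial ν).mul_right _

lemma tsum_pois (ν : ℝ) : ∑' i, pois ν i = 1 := by
  have h : pois ν = fun i => Real.exp (-ν) * (ν ^ i / (Nat.factorial i)) := by
    funext i; unfold pois; ring
  rw [h, tsum_mul_left]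
  rw [show ∑' (i:ℕ), ν ^ i / (Nat.factorial i) = Real.exp ν from by
    rw [Real.exp_eq_exp_ℝ, NormedSpace.exp_eq_tsum_div]]
  rw [← Real.exp_add]; simp

lemma pois_succ (ν : ℝ) (i : ℕ) : ((i:ℝ)+1) * pois ν (i+1) = ν * pois ν i := by
  unfold pois
  rw [Nat.factorial_succ]
  push_cast
  have h1 : ((i:ℝ) + 1) ≠ 0 := by positivity
  have h2 : ((Nat.factorial i : ℝ)) ≠ 0 := by
    exact_mod_cast Nat.factorial_ne_zero i
  field_simp
  ring

lemma summable_id_pois (ν : ℝ) : Summable (fun i : ℕ => (i:ℝ) * pois ν i) := by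
  rw [← summable_nat_add_iff 1]
  have h : (fun i : ℕ => ((i:ℕ)+1 : ℝ) * pois ν (i+1)) = fun i => ν * pois ν i := by
    funext i; exact_mod_cast pois_succ ν i
  simpa [h] using (summable_pois ν).mul_left ν

lemma tsum_id_pois (ν : ℝ) : ∑' i : ℕ, (i:ℝ) * pois ν i = ν := by
  rw [Summable.tsum_eq_zero_add (summable_id_pois ν)]
  have h : (fun i : ℕ => ((i:ℕ)+1 : ℝ) * pois ν (i+1)) = fun i => ν * pois ν i := by
    funext i; exact_mod_cast pois_succ ν i
  push_cast
  calc (0:ℝ) * pois ν 0 + ∑' i : ℕ, ((i:ℝ)+1) * pois ν (i+1)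
      = ∑' i : ℕ, ν * pois ν i := by rw [show (fun i : ℕ => ((i:ℝ)+1) * pois ν (i+1)) = fun i => ν * pois ν i from h]; ring_nf
    _ = ν := by rw [tsum_mul_left, tsum_pois]; ring

lemma summable_psi_term {ν b : ℝ} (hν : 0 ≤ ν) (hb : 0 < b) :
    Summable (fun i : ℕ => pois ν i * (1 / (b + (i:ℝ)))) := by
  refine Summable.of_nonneg_of_le (fun i => ?_) (fun i => ?_)
    ((summable_pois ν).mul_right (1/b))
  · have : (0:ℝ) < b + i := by positivity
    have := pois_nonneg hν i
    positivity
  · refine mul_le_mul_of_nonneg_left ?_ (pois_nonneg hν i)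
    refine one_div_le_one_div_of_le hb (by simp)

lemma psi_nonneg {ν b : ℝ} (hν : 0 ≤ ν) (hb : 0 < b) : 0 ≤ psi ν b := by
  refine tsum_nonneg fun i => ?_
  have : (0:ℝ) < b + i := by positivity
  have := pois_nonneg hν i
  positivity

lemma psi_le {ν b : ℝ} (hν : 0 ≤ ν) (hb : 0 < b) : psi ν b ≤ 1/b := by
  unfold psi
  calc ∑' i : ℕ, pois ν i * (1/(b + (i:ℝ)))
      ≤ ∑' i : ℕ, pois ν i * (1/b) := by
        refine Summable.tsum_le_tsum (fun i => ?_) (summable_psi_term hν hb)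
          ((summable_pois ν).mul_right _)
        refine mul_le_mul_of_nonneg_left ?_ (pois_nonneg hν i)
        exact one_div_le_one_div_of_le hb (by simp)
    _ = 1/b := by rw [tsum_mul_right, tsum_pois, one_mul]

lemma psi_zero (b : ℝ) : psi 0 b = 1/b := by
  unfold psi
  rw [tsum_eq_single 0 (fun i hi => by unfold pois; rw [zero_pow hi]; simp)]
  unfold pois; simp

lemma pois_mul_antidiagonal (a r : ℝ) (n : ℕ) :
    ∑ kl ∈ Finset.HasAntidiagonal.antidiagonal n, pois a kl.1 * pois r kl.2 = pois (a+r) n := by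
  unfold pois
  rw [Finset.Nat.sum_antidiagonal_eq_sum_range_succ
    (fun k l => a^k * Real.exp (-a) / (Nat.factorial k) * (r^l * Real.exp (-r) / (Nat.factorial l)))]
  rw [add_pow, Finset.sum_mul, Finset.sum_div]
  refine Finset.sum_congr rfl fun x hx => ?_
  have hxn : x ≤ n := Nat.lt_succ_iff.mp (Finset.mem_range.mp hx)
  have hfac : ∀ m : ℕ, ((Nat.factorial m : ℝ)) ≠ 0 := fun m => by
    exact_mod_cast (Nat.factorial_ne_zero m)
  have hn : (Nat.factorial n : ℝ)
      = (n.choose x : ℝ) * (Nat.factorial x) * (Nat.factorial (n-x)) := by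
    exact_mod_cast (Nat.choose_mul_factorial_mul_factorial hxn).symm
  have hch : (0:ℝ) < (n.choose x : ℝ) := by
    exact_mod_cast Nat.choose_pos hxn
  have hexp : Real.exp (-(a+r)) = Real.exp (-a) * Real.exp (-r) := by
    rw [← Real.exp_add]; ring_nf
  rw [hn, hexp]
  field_simp

set_option maxHeartbeats 1000000 in
lemma psi_conv {a r b : ℝ} (ha : 0 ≤ a) (hr : 0 ≤ r) (hb : 0 < b) :
    psi (a + r) b = ∑' i : ℕ, pois a i * psi r (b + (i:ℝ)) := by
  set F : ℕ × ℕ → ℝ := fun x => pois a x.1 * (pois r x.2 * (1/(b + (x.1:ℝ) + (x.2:ℝ)))) with hF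
  have hpos : ∀ x : ℕ × ℕ, (0:ℝ) < b + (x.1:ℝ) + (x.2:ℝ) := fun x => by positivity
  have hFnn : ∀ x, 0 ≤ F x := fun x =>
    mul_nonneg (pois_nonneg ha _) (mul_nonneg (pois_nonneg hr _) (le_of_lt (by positivity)))
  have hFle : ∀ x : ℕ × ℕ, F x ≤ pois a x.1 * (pois r x.2 * (1/b)) := by
    intro x
    refine mul_le_mul_of_nonneg_left ?_ (pois_nonneg ha _)
    refine mul_le_mul_of_nonneg_left ?_ (pois_nonneg hr _)
    refine one_div_le_one_div_of_le hb ?_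
    have h1 : (0:ℝ) ≤ (x.1:ℝ) := Nat.cast_nonneg _
    have h2 : (0:ℝ) ≤ (x.2:ℝ) := Nat.cast_nonneg _
    linarith
  have hprod : Summable (fun x : ℕ × ℕ => pois a x.1 * (pois r x.2 * (1/b))) :=
    Summable.mul_of_nonneg (summable_pois a) ((summable_pois r).mul_right (1/b))
      (pois_nonneg ha) (fun l => mul_nonneg (pois_nonneg hr l) (by positivity))
  have hFsum : Summable F := Summable.of_nonneg_of_le hFnn hFle hprod
  have hslice : ∀ i : ℕ, Summable (fun l => F (i, l)) := by
    intro i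
    refine Summable.of_nonneg_of_le (fun l => hFnn _) (fun l => hFle _)
      (((summable_pois r).mul_right (1/b)).mul_left (pois a i))
  have hA : ∑' i : ℕ, pois a i * psi r (b + (i:ℝ)) = ∑' x : ℕ × ℕ, F x := by
    rw [Summable.tsum_prod' hFsum hslice]
    refine tsum_congr fun i => ?_
    unfold psi
    rw [← tsum_mul_left]
  have hB : ∑' x : ℕ × ℕ, F x = ∑' n : ℕ, ∑ kl ∈ Finset.HasAntidiagonal.antidiagonal n, F kl := by
    have hsig : Summable (fun c : (n : ℕ) × { x // x ∈ Finset.HasAntidiagonal.antidiagonal n } =>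
        F (Finset.HasAntidiagonal.sigmaAntidiagonalEquivProd c)) :=
      (Equiv.summable_iff _).mpr hFsum
    calc ∑' x : ℕ × ℕ, F x
        = ∑' c : (n : ℕ) × { x // x ∈ Finset.HasAntidiagonal.antidiagonal n },
            F (Finset.HasAntidiagonal.sigmaAntidiagonalEquivProd c) :=
          (Finset.HasAntidiagonal.sigmaAntidiagonalEquivProd.tsum_eq F).symm
      _ = ∑' (n : ℕ) (kl : { x // x ∈ Finset.HasAntidiagonal.antidiagonal n }),
            F (Finset.HasAntidiagonal.sigmaAntidiagonalEquivProd ⟨n, kl⟩) :=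
          Summable.tsum_sigma' (fun n => (hasSum_fintype _).summable) hsig
      _ = ∑' n : ℕ, ∑ kl ∈ Finset.HasAntidiagonal.antidiagonal n, F kl := by
          refine tsum_congr fun n => ?_
          rw [tsum_fintype]
          have he : ∀ kl : { x // x ∈ Finset.HasAntidiagonal.antidiagonal n },
              F (Finset.HasAntidiagonal.sigmaAntidiagonalEquivProd ⟨n, kl⟩) = F ↑kl := fun kl => rfl
          rw [Finset.sum_congr rfl fun kl _ => he kl]
          exact Finset.sum_finset_coe (fun kl => F kl) _
  have hC : ∀ n : ℕ, ∑ kl ∈ Finset.HasAntidiagonal.antidiagonal n, F kl = pois (a+r) n * (1/(b+(n:ℝ))) := by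
    intro n
    have h1 : ∀ kl ∈ Finset.HasAntidiagonal.antidiagonal n,
        F kl = (pois a kl.1 * pois r kl.2) * (1/(b+(n:ℝ))) := by
      intro kl hkl
      have hkl' : kl.1 + kl.2 = n := Finset.HasAntidiagonal.mem_antidiagonal.mp hkl
      have : (b + (kl.1:ℝ) + (kl.2:ℝ)) = b + (n:ℝ) := by
        rw [← hkl']; push_cast; ring
      rw [hF]
      simp only []
      rw [this]
      ring
    rw [Finset.sum_congr rfl h1, ← Finset.sum_mul, pois_mul_antidiagonal]
  rw [hA, hB]
  unfold psi
  exact tsum_congr fun n => (hC n).symm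

lemma bpois {r b : ℝ} (hr : 0 ≤ r) (hb : 0 < b) :
    (1 - r) * (1/b) + r * (1/(b+1)) ≤ psi r b := by
  have hsum1 : Summable (fun l : ℕ => pois r l * (1/b)) := (summable_pois r).mul_right _
  have hsum2 : Summable (fun l : ℕ => ((l:ℝ) * pois r l) * (1/b - 1/(b+1))) :=
    (summable_id_pois r).mul_right _
  have hle : ∀ l : ℕ, pois r l * (1/b) - ((l:ℝ) * pois r l) * (1/b - 1/(b+1))
      ≤ pois r l * (1/(b + (l:ℝ))) := by
    intro l
    have h := conv_nat hb l
    have hp := pois_nonneg hr l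
    calc pois r l * (1/b) - ((l:ℝ) * pois r l) * (1/b - 1/(b+1))
        = pois r l * (1/(b+1) + (1 - (l:ℝ))*(1/b - 1/(b+1))) := by ring
      _ ≤ pois r l * (1/(b + (l:ℝ))) := mul_le_mul_of_nonneg_left h hp
  have h2 := Summable.tsum_le_tsum hle (hsum1.sub hsum2) (summable_psi_term hr hb)
  rw [Summable.tsum_sub hsum1 hsum2, tsum_mul_right, tsum_mul_right, tsum_pois, tsum_id_pois] at h2
  unfold psi
  calc (1-r)*(1/b) + r*(1/(b+1)) = 1 * (1/b) - r * (1/b - 1/(b+1)) := by ring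
    _ ≤ _ := h2

lemma key_ineq {ν r b : ℝ} (hν : 0 ≤ ν) (hr : 0 ≤ r) (hb : 0 < b) :
    (1 - r) * psi ν b + r * psi ν (b+1) ≤ psi (ν + r) b := by
  rw [psi_conv hν hr hb]
  have hS1 : Summable (fun i : ℕ => pois ν i * (1/(b+(i:ℝ)))) := summable_psi_term hν hb
  have hb1 : (0:ℝ) < b + 1 := by linarith
  have hS2 : Summable (fun i : ℕ => pois ν i * (1/(b+1+(i:ℝ)))) := summable_psi_term hν hb1
  have hRS : Summable (fun i : ℕ => pois ν i * psi r (b + (i:ℝ))) := by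
    refine Summable.of_nonneg_of_le (fun i => ?_) (fun i => ?_)
      ((summable_pois ν).mul_right (1/b))
    · exact mul_nonneg (pois_nonneg hν i) (psi_nonneg hr (by positivity))
    · refine mul_le_mul_of_nonneg_left ?_ (pois_nonneg hν i)
      calc psi r (b + (i:ℝ)) ≤ 1/(b+(i:ℝ)) := psi_le hr (by positivity)
        _ ≤ 1/b := one_div_le_one_div_of_le hb (by simp)
  have hLHS : (1 - r) * psi ν b + r * psi ν (b+1)
      = ∑' i : ℕ, (pois ν i * ((1-r) * (1/(b+(i:ℝ))) + r * (1/(b+(i:ℝ)+1)))) := by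
    unfold psi
    rw [← tsum_mul_left, ← tsum_mul_left, ← Summable.tsum_add (hS1.mul_left _) (hS2.mul_left _)]
    exact tsum_congr fun i => by ring
  rw [hLHS]
  refine Summable.tsum_le_tsum (fun i => ?_) ?_ hRS
  · have hbi : (0:ℝ) < b + (i:ℝ) := by positivity
    exact mul_le_mul_of_nonneg_left (bpois hr hbi) (pois_nonneg hν i)
  · refine Summable.congr ((hS1.mul_left (1-r)).add (hS2.mul_left r)) fun i => by ring

lemma pois_bound {ι : Type*} [Fintype ι] [DecidableEq ι] (q : ι → ℝ)
    (hq : ∀ i, q i ∈ Set.Icc (0:ℝ) 1) {c : ℝ} (hc : 0 < c) (A : Finset ι) :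
    ∑ v : ι → Bool, bw q v * (1/(c + cntF A v)) ≤ psi (∑ i ∈ A, q i) c := by
  have hnn := bw_nonneg hq
  have main : ∀ A : Finset ι, ∀ ν : ℝ, 0 ≤ ν →
      ∑ v : ι → Bool, bw q v * psi ν (c + cntF A v) ≤ psi (ν + ∑ i ∈ A, q i) c := by
    intro A
    induction A using Finset.induction_on with
    | empty =>
        intro ν hν
        simp only [Finset.sum_empty, add_zero]
        refine le_of_eq ?_
        calc ∑ v : ι → Bool, bw q v * psi ν (c + cntF (∅ : Finset ι) v)
            = ∑ v : ι → Bool, bw q v * psi ν c := by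
              refine Finset.sum_congr rfl fun v _ => by
                rw [show cntF (∅ : Finset ι) v = 0 from by simp [cntF], add_zero]
          _ = psi ν c := by rw [← Finset.sum_mul, bw_sum, one_mul]
    | @insert j A hj ih =>
        intro ν hν
        have hsplit := bw_split q j
          (fun b v => psi ν (c + ((if b then (1:ℝ) else 0) + cntF A v)))
          (fun v b b' => by simp only [cntF_update hj])
        norm_num at hsplit
        have hstep : ∑ v : ι → Bool, bw q v * psi ν (c + cntF (insert j A) v)
            = ∑ v : ι → Bool, bw q v *
              (q j * psi ν (c + (1 + cntF A v)) + (1 - q j) * psi ν (c + cntF A v)) := by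
          calc ∑ v : ι → Bool, bw q v * psi ν (c + cntF (insert j A) v)
              = ∑ v : ι → Bool,
                  bw q v * psi ν (c + ((if v j then (1:ℝ) else 0) + cntF A v)) := by
                refine Finset.sum_congr rfl fun v _ => ?_
                rw [show cntF (insert j A) v
                  = (if v j then (1:ℝ) else 0) + cntF A v from Finset.sum_insert hj]
            _ = _ := hsplit
        rw [hstep]
        have hpt : ∀ v : ι → Bool,
            bw q v * (q j * psi ν (c + (1 + cntF A v)) + (1 - q j) * psi ν (c + cntF A v))
            ≤ bw q v * psi (ν + q j) (c + cntF A v) := by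
          intro v
          refine mul_le_mul_of_nonneg_left ?_ (hnn v)
          have hb : 0 < c + cntF A v := by linarith [cntF_nonneg A v]
          have hkey := key_ineq hν (hq j).1 hb
          have e1 : c + (1 + cntF A v) = (c + cntF A v) + 1 := by ring
          rw [e1]
          linarith
        calc ∑ v : ι → Bool, bw q v *
              (q j * psi ν (c + (1 + cntF A v)) + (1 - q j) * psi ν (c + cntF A v))
            ≤ ∑ v : ι → Bool, bw q v * psi (ν + q j) (c + cntF A v) :=
              Finset.sum_le_sum fun v _ => hpt v
          _ ≤ psi ((ν + q j) + ∑ i ∈ A, q i) c := ih (ν + q j) (add_nonneg hν (hq j).1)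
          _ = psi (ν + ∑ i ∈ insert j A, q i) c := by
              rw [Finset.sum_insert hj]; ring_nf
  have h0 := main A 0 le_rfl
  rw [zero_add] at h0
  refine le_trans (le_of_eq ?_) h0
  refine Finset.sum_congr rfl fun v _ => ?_
  rw [psi_zero]

/-- The Dice coefficient, with the convention `D(0,0) = 0`. -/
noncomputable def dice {n : ℕ} (y yh : Fin n → Bool) : ℝ :=
  if (∀ j, y j = false) ∧ (∀ j, yh j = false) then 0
  else (2 * ∑ j, (if y j ∧ yh j then (1:ℝ) else 0)) /
    (∑ j, ((if y j then (1:ℝ) else 0) + (if yh j then (1:ℝ) else 0)))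

/-- The Soft Dice Confidence, with `SDC(0,0) = 0`. -/
noncomputable def SDC {n : ℕ} (p : Fin n → ℝ) (yh : Fin n → Bool) : ℝ :=
  if (∀ j, p j = 0) ∧ (∀ j, yh j = false) then 0
  else (2 * ∑ j, p j * (if yh j then (1:ℝ) else 0)) /
    (∑ j, (p j + (if yh j then (1:ℝ) else 0)))

/-- The (marginal-based) Ideal Dice Confidence under conditional independence. -/
noncomputable def IDC {n : ℕ} (p : Fin n → ℝ) (yh : Fin n → Bool) : ℝ :=
  ∑ y : Fin n → Bool, (∏ i, (if y i then p i else 1 - p i)) * dice y yh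

/-- Theorem 1, main inequality: `b_L ≤ IDC/SDC ≤ b_U`. -/
theorem idc_div_sdc_bounds
    (n : ℕ) (p : Fin n → ℝ) (hp : ∀ i, p i ∈ Set.Icc (0:ℝ) 1)
    (yh : Fin n → Bool) (s k μ lam : ℝ)
    (hs : s = ∑ i, p i * (if yh i then (1:ℝ) else 0)) (hspos : 0 < s)
    (hk : k = ∑ i, (if yh i then (1:ℝ) else 0))
    (hμ : μ = s / k)
    (hlam : lam = ∑ i, p i * (if yh i then (0:ℝ) else 1)) :
    (k + k*μ + lam) / (k + 1 + (k-1)*μ + lam) ≤ IDC p yh / SDC p yh ∧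
    IDC p yh / SDC p yh
      ≤ ∑' i : ℕ, lam^i * Real.exp (-lam) / (Nat.factorial i) *
          ((k + k*μ + lam) / (k + k*μ + i)) := by
  classical
  obtain ⟨i0, hi0⟩ : ∃ i, yh i = true := by
    by_contra h
    push_neg at h
    have hz : s = 0 := by
      rw [hs]
      refine Finset.sum_eq_zero fun i _ => ?_
      simp [h i]
    linarith
  set S : Finset (Fin n) := Finset.univ.filter (fun i => yh i = true) with hS
  set Sc : Finset (Fin n) := Finset.univ.filter (fun i => ¬ (yh i = true)) with hSc
  have hsS : s = ∑ i ∈ S, p i := by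
    rw [hs, hS, Finset.sum_filter]
    exact Finset.sum_congr rfl fun i _ => by by_cases h : yh i <;> simp [h]
  have hlamSc : lam = ∑ i ∈ Sc, p i := by
    rw [hlam, hSc, Finset.sum_filter]
    exact Finset.sum_congr rfl fun i _ => by by_cases h : yh i <;> simp [h]
  have hkS : k = (S.card : ℝ) := by
    rw [hk, Finset.sum_boole, hS]
  have hk1 : 1 ≤ k := by
    rw [hkS]
    have : 0 < S.card := Finset.card_pos.mpr ⟨i0, by simp [hS, hi0]⟩
    exact_mod_cast this
  have hk0 : (0:ℝ) < k := lt_of_lt_of_le one_pos hk1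
  have hkμ : k * μ = s := by
    rw [hμ]; field_simp
  have hlam0 : 0 ≤ lam := by
    rw [hlamSc]; exact Finset.sum_nonneg fun i _ => (hp i).1
  have hsk : s ≤ k := by
    rw [hsS, hkS]
    calc ∑ i ∈ S, p i ≤ ∑ _i ∈ S, (1:ℝ) := Finset.sum_le_sum fun i _ => (hp i).2
      _ = (S.card : ℝ) := by simp
  have hμpos : 0 < μ := by rw [hμ]; positivity
  have hμ1 : μ ≤ 1 := by rw [hμ, div_le_one hk0]; exact hsk
  have hsum_p : ∑ j, p j = s + lam := by
    rw [hsS, hlamSc, hS, hSc]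
    exact (Finset.sum_filter_add_sum_filter_not Finset.univ (fun i => yh i = true) p).symm
  -- SDC rewrite
  have hguard : ¬ ((∀ j, p j = 0) ∧ (∀ j, yh j = false)) := by
    rintro ⟨-, h2⟩
    rw [h2 i0] at hi0
    exact Bool.false_ne_true hi0
  have hSDC : SDC p yh = 2*s/(k + (s+lam)) := by
    rw [SDC, if_neg hguard]
    congr 1
    · rw [← hs]
    · rw [Finset.sum_add_distrib, hsum_p, ← hk]; ring
  have hSDCpos : 0 < SDC p yh := by
    rw [hSDC]
    have : (0:ℝ) < k + (s+lam) := by linarith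
    positivity
  -- IDC rewrite
  have hdguard : ∀ v : Fin n → Bool, ¬ ((∀ j, v j = false) ∧ (∀ j, yh j = false)) := by
    intro v
    rintro ⟨-, h2⟩
    rw [h2 i0] at hi0
    exact Bool.false_ne_true hi0
  have hdice : ∀ v : Fin n → Bool,
      dice v yh = 2 * cntF S v / (cntF Finset.univ v + k) := by
    intro v
    rw [dice, if_neg (hdguard v)]
    congr 1
    · congr 1
      rw [hS, cntF, Finset.sum_filter]
      refine Finset.sum_congr rfl fun j _ => ?_
      by_cases h1 : v j <;> by_cases h2 : yh j <;> simp [h1, h2]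
    · rw [Finset.sum_add_distrib, ← hk]
      rfl
  have hIDC2 : IDC p yh
      = 2 * ∑ v : Fin n → Bool, bw p v * (cntF S v * (1/(k + cntF Finset.univ v))) := by
    rw [IDC, Finset.mul_sum]
    refine Finset.sum_congr rfl fun v _ => ?_
    rw [show (∏ i, (if v i then p i else 1 - p i)) = bw p v from rfl, hdice v]
    have h1 : cntF Finset.univ v + k = k + cntF Finset.univ v := by ring
    rw [h1]
    ring
  have hNnn : ∀ v : Fin n → Bool, 0 ≤ cntF Finset.univ v := cntF_nonneg _
  have hTnn : ∀ v : Fin n → Bool, 0 ≤ cntF S v := cntF_nonneg _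
  have hFnn : ∀ v : Fin n → Bool, 0 ≤ cntF Sc v := cntF_nonneg _
  have hcnt_univ : ∀ v : Fin n → Bool, cntF Finset.univ v = cntF S v + cntF Sc v := by
    intro v
    rw [hS, hSc, cntF, cntF, cntF]
    exact (Finset.sum_filter_add_sum_filter_not Finset.univ (fun i => yh i = true) _).symm
  have hiSc : ∀ i ∈ S, i ∉ Sc := by
    intro i hi
    rw [hS, Finset.mem_filter] at hi
    simp [hSc, hi.2]
  have hinner_swap : ∑ v : Fin n → Bool, bw p v * (cntF S v * (1/(k + cntF Finset.univ v)))
      = ∑ i ∈ S, ∑ v : Fin n → Bool,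
          bw p v * ((if v i then (1:ℝ) else 0) * (1/(k + cntF Finset.univ v))) := by
    calc ∑ v : Fin n → Bool, bw p v * (cntF S v * (1/(k + cntF Finset.univ v)))
        = ∑ v : Fin n → Bool, ∑ i ∈ S,
            bw p v * ((if v i then (1:ℝ) else 0) * (1/(k + cntF Finset.univ v))) := by
          refine Finset.sum_congr rfl fun v _ => ?_
          rw [show cntF S v = ∑ i ∈ S, (if v i then (1:ℝ) else 0) from rfl,
            Finset.sum_mul, Finset.mul_sum]
      _ = _ := Finset.sum_comm
  -- ===== LOWER BOUND =====
  have hcμpos : 0 < k + 1 + (s+lam) - μ := by linarith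
  have hlow1 : ∀ i ∈ S, p i * (1/(k + 1 + (s+lam) - p i))
      ≤ ∑ v : Fin n → Bool,
          bw p v * ((if v i then (1:ℝ) else 0) * (1/(k + cntF Finset.univ v))) := by
    intro i hiS
    have hpiS : p i ≤ s := by
      rw [hsS]
      exact Finset.single_le_sum (fun j _ => (hp j).1) hiS
    have hm0 : 0 ≤ s + lam - p i := by linarith
    have hci : 0 < (k+1) + (s + lam - p i) := by linarith
    have hpt : ∀ v : Fin n → Bool,
        bw p v * ((if v i then (1:ℝ) else 0) *
          (1/((k+1) + (s+lam-p i)) + (s+lam-p i)/((k+1) + (s+lam-p i))^2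
            - (cntF (Finset.univ.erase i) v)/((k+1) + (s+lam-p i))^2))
        ≤ bw p v * ((if v i then (1:ℝ) else 0) * (1/(k + cntF Finset.univ v))) := by
      intro v
      by_cases h : v i
      · have hsplit_i : cntF Finset.univ v = 1 + cntF (Finset.univ.erase i) v := by
          rw [cntF, ← Finset.add_sum_erase _ _ (Finset.mem_univ i), if_pos h]
          rfl
        refine mul_le_mul_of_nonneg_left ?_ (bw_nonneg hp v)
        rw [if_pos h, one_mul, one_mul, hsplit_i]
        have hx := cntF_nonneg (Finset.univ.erase i) v
        have htan := tan_conv (C := k+1) (x := cntF (Finset.univ.erase i) v)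
          (m := s+lam-p i) (by linarith) hci
        have e : k + (1 + cntF (Finset.univ.erase i) v)
            = (k+1) + cntF (Finset.univ.erase i) v := by ring
        rw [e]
        have e2 : 1/((k+1) + (s+lam-p i)) + (s+lam-p i)/((k+1) + (s+lam-p i))^2
            - (cntF (Finset.univ.erase i) v)/((k+1) + (s+lam-p i))^2
            = 1/((k+1)+(s+lam-p i))
              - (cntF (Finset.univ.erase i) v - (s+lam-p i))/((k+1)+(s+lam-p i))^2 := by
          ring
        rw [e2]
        exact htan
      · simp [h]
    have hsum := Finset.sum_le_sum fun v (_ : v ∈ Finset.univ) => hpt v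
    refine le_trans (le_of_eq ?_) hsum
    have hmean := bw_extract p i
    have hmoment := bw_extract_cnt p (i := i) (A := Finset.univ.erase i)
      (Finset.notMem_erase i _)
    have hsum_erase : ∑ j ∈ Finset.univ.erase i, p j = s + lam - p i := by
      have h1 := Finset.add_sum_erase Finset.univ p (Finset.mem_univ i)
      rw [hsum_p] at h1
      linarith
    have expand : ∀ v : Fin n → Bool,
        bw p v * ((if v i then (1:ℝ) else 0) *
          (1/((k+1) + (s+lam-p i)) + (s+lam-p i)/((k+1) + (s+lam-p i))^2
            - (cntF (Finset.univ.erase i) v)/((k+1) + (s+lam-p i))^2))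
        = (1/((k+1) + (s+lam-p i)) + (s+lam-p i)/((k+1) + (s+lam-p i))^2)
            * (bw p v * (if v i then (1:ℝ) else 0))
          - (1/((k+1) + (s+lam-p i))^2)
            * (bw p v * ((if v i then (1:ℝ) else 0) * cntF (Finset.univ.erase i) v)) := by
      intro v
      ring
    rw [Finset.sum_congr rfl fun v _ => expand v, Finset.sum_sub_distrib,
      ← Finset.mul_sum, ← Finset.mul_sum, hmean, hmoment, hsum_erase]
    have e3 : k + 1 + (s+lam) - p i = (k+1) + (s+lam-p i) := by ring
    rw [e3]
    ring
  have hlow2 : s * (1/(k + 1 + (s+lam) - μ))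
      ≤ ∑ i ∈ S, p i * (1/(k + 1 + (s+lam) - p i)) := by
    have hterm : ∀ i ∈ S, μ/((k+1+(s+lam))-μ) + (k+1+(s+lam))*(p i-μ)/((k+1+(s+lam))-μ)^2
        ≤ p i/((k+1+(s+lam)) - p i) := by
      intro i hiS
      refine tan3 (by linarith) ?_ (by linarith)
      have := (hp i).2
      linarith
    have hsum := Finset.sum_le_sum hterm
    have hL : ∑ i ∈ S, (μ/((k+1+(s+lam))-μ) + (k+1+(s+lam))*(p i-μ)/((k+1+(s+lam))-μ)^2)
        = k * (μ/(k+1+(s+lam)-μ)) + (k+1+(s+lam))*(s-k*μ)/(k+1+(s+lam)-μ)^2 := by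
      rw [Finset.sum_add_distrib, Finset.sum_const, nsmul_eq_mul, ← hkS]
      congr 1
      have e : ∀ i ∈ S, (k+1+(s+lam))*(p i-μ)/((k+1+(s+lam))-μ)^2
          = (p i - μ) * ((k+1+(s+lam))/(k+1+(s+lam)-μ)^2) := fun i _ => by ring
      rw [Finset.sum_congr rfl e, ← Finset.sum_mul, Finset.sum_sub_distrib,
        Finset.sum_const, nsmul_eq_mul, ← hkS, ← hsS]
      ring
    rw [hL] at hsum
    have e3 : ∀ i ∈ S, p i/(k+1+(s+lam)-p i) = p i * (1/(k+1+(s+lam)-p i)) :=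
      fun i _ => by ring
    have hsum2 : ∑ i ∈ S, p i/((k+1+(s+lam)) - p i)
        = ∑ i ∈ S, p i * (1/(k+1+(s+lam)-p i)) := Finset.sum_congr rfl e3
    rw [hsum2] at hsum
    have heq : s * (1/(k+1+(s+lam)-μ))
        = k*(μ/(k+1+(s+lam)-μ)) + (k+1+(s+lam))*(s-k*μ)/(k+1+(s+lam)-μ)^2 := by
      rw [← hkμ]; ring
    rw [heq]
    exact hsum
  have hIDClow : 2 * (s * (1/(k + 1 + (s+lam) - μ))) ≤ IDC p yh := by
    rw [hIDC2]
    refine mul_le_mul_of_nonneg_left ?_ (by norm_num)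
    rw [hinner_swap]
    exact le_trans hlow2 (Finset.sum_le_sum hlow1)
  constructor
  · -- lower bound conclusion
    rw [le_div_iff₀ hSDCpos, hSDC]
    have e1 : k + k*μ + lam = k + (s+lam) := by rw [hkμ]; ring
    have e2 : k + 1 + (k-1)*μ + lam = k + 1 + (s+lam) - μ := by
      have h1 : (k-1)*μ = s - μ := by
        have := hkμ
        nlinarith [hkμ]
      rw [h1]; ring
    rw [e1, e2]
    have hd : (0:ℝ) < k + (s+lam) := by linarith
    have e3 : (k+(s+lam))/(k+1+(s+lam)-μ) * (2*s/(k+(s+lam)))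
        = 2*(s*(1/(k+1+(s+lam)-μ))) := by
      field_simp
    rw [e3]
    exact hIDClow
  · -- ===== UPPER BOUND =====
    set W : (Fin n → Bool) → ℝ :=
      fun v => (k + cntF Sc v)/((k + cntF Sc v + s)^2) with hWdef
    have hup1 : ∑ v : Fin n → Bool, bw p v * (cntF S v * (1/(k + cntF Finset.univ v)))
        ≤ ∑ v : Fin n → Bool, bw p v *
            (s * (1/((k+s) + cntF Sc v)) + (cntF S v - s) * W v) := by
      refine Finset.sum_le_sum fun v _ => ?_
      refine mul_le_mul_of_nonneg_left ?_ (bw_nonneg hp v)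
      have hC : 0 < k + cntF Sc v := by linarith [hFnn v]
      have htan := tan_conc (C := k + cntF Sc v) (t := cntF S v) (s := s)
        hC (by linarith [hTnn v, hFnn v]) (by linarith [hFnn v])
      calc cntF S v * (1/(k + cntF Finset.univ v))
          = cntF S v/((k + cntF Sc v) + cntF S v) := by
            rw [hcnt_univ v]; ring
        _ ≤ s/((k + cntF Sc v)+s)
            + (k + cntF Sc v)*(cntF S v - s)/((k + cntF Sc v)+s)^2 := htan
        _ = s * (1/((k+s) + cntF Sc v)) + (cntF S v - s) * W v := by
            rw [hWdef]
            ring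
    have hWupd : ∀ i ∈ S, ∀ (v : Fin n → Bool) (b : Bool),
        W (Function.update v i b) = W v := by
      intro i hi v b
      rw [hWdef]
      simp only [cntF_update (hiSc i hi)]
    have hmean0 : ∑ v : Fin n → Bool, bw p v * (cntF S v * W v)
        = s * ∑ v : Fin n → Bool, bw p v * W v := by
      calc ∑ v : Fin n → Bool, bw p v * (cntF S v * W v)
          = ∑ v : Fin n → Bool, ∑ i ∈ S, bw p v * ((if v i then (1:ℝ) else 0) * W v) := by
            refine Finset.sum_congr rfl fun v _ => ?_
            rw [show cntF S v = ∑ i ∈ S, (if v i then (1:ℝ) else 0) from rfl,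
              Finset.sum_mul, Finset.mul_sum]
        _ = ∑ i ∈ S, ∑ v : Fin n → Bool,
              bw p v * ((if v i then (1:ℝ) else 0) * W v) := Finset.sum_comm
        _ = ∑ i ∈ S, p i * ∑ v : Fin n → Bool, bw p v * W v := by
            refine Finset.sum_congr rfl fun i hi => ?_
            exact bw_extract_fun p i W (fun v b => hWupd i hi v b)
        _ = s * ∑ v : Fin n → Bool, bw p v * W v := by
            rw [← Finset.sum_mul, ← hsS]
    have hup2 : ∑ v : Fin n → Bool, bw p v *
          (s * (1/((k+s) + cntF Sc v)) + (cntF S v - s) * W v)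
        = s * ∑ v : Fin n → Bool, bw p v * (1/((k+s) + cntF Sc v)) := by
      have e : ∀ v : Fin n → Bool, bw p v *
            (s * (1/((k+s) + cntF Sc v)) + (cntF S v - s) * W v)
          = s * (bw p v * (1/((k+s) + cntF Sc v)))
            + (bw p v * (cntF S v * W v) - s * (bw p v * W v)) := fun v => by ring
      rw [Finset.sum_congr rfl fun v _ => e v, Finset.sum_add_distrib,
        Finset.sum_sub_distrib, ← Finset.mul_sum, ← Finset.mul_sum, hmean0]
      ring
    have hks : (0:ℝ) < k + s := by linarith
    have hup3 : ∑ v : Fin n → Bool, bw p v * (1/((k+s) + cntF Sc v))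
        ≤ psi lam (k+s) := by
      have := pois_bound p hp hks Sc
      rw [← hlamSc] at this
      exact this
    have hIDCup : IDC p yh ≤ 2 * (s * psi lam (k+s)) := by
      rw [hIDC2]
      refine mul_le_mul_of_nonneg_left ?_ (by norm_num)
      calc ∑ v : Fin n → Bool, bw p v * (cntF S v * (1/(k + cntF Finset.univ v)))
          ≤ ∑ v : Fin n → Bool, bw p v *
              (s * (1/((k+s) + cntF Sc v)) + (cntF S v - s) * W v) := hup1
        _ = s * ∑ v : Fin n → Bool, bw p v * (1/((k+s) + cntF Sc v)) := hup2
        _ ≤ s * psi lam (k+s) := mul_le_mul_of_nonneg_left hup3 (le_of_lt hspos)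
    have hRHS : (∑' i : ℕ, lam^i * Real.exp (-lam) / (Nat.factorial i)
          * ((k + k*μ + lam) / (k + k*μ + i)))
        = (k+(s+lam)) * psi lam (k+s) := by
      have e : k + k*μ = k + s := by rw [hkμ]
      unfold psi
      rw [← tsum_mul_left]
      refine tsum_congr fun i => ?_
      rw [e]
      unfold pois
      ring
    rw [div_le_iff₀ hSDCpos, hSDC, hRHS]
    have hd : (0:ℝ) < k + (s+lam) := by linarith
    have e4 : (k+(s+lam)) * psi lam (k+s) * (2*s/(k+(s+lam)))
        = 2 * (s * psi lam (k+s)) := by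
      field_simp
    rw [e4]
    exact hIDCup
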